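/- The element Λ = κ^{2p} # k^{2p} of the Heisenberg double H(B*) of the dual Taft algebra satisfies Λ·(F^a κ^b # E^c k^d) = (−1)^b F^a κ^{b+2p} # E^c k^{d+2p} and (F^a κ^b # E^c k^d)·Λ = (−1)^d F^a κ^{b+2p} # E^c k^{d+2p}; consequently Λ is central in the subalgebra spanned by Ψ^{a,b,c} = F^a κ^b # E^c k^{b−2c} (where b ≡ d + 2c ensures (−1)^b = (−1)^d), though not central in all of H(B*). -/

import Mathlib

/-!
`Λ = κ^{2p} # k^{2p}` is a product of grouplikes, so in the product formula only the `u = 0`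
term survives: multiplying by `Λ` shifts the exponents of `κ` and `k` by `2p` and produces the
scalar `q2 ^ (2p·t)` for an integer `t`. As `q2 ^ (2p) = -1`, this scalar is `(-1)^t`, and
`t ≡ b` (on the left) resp. `t ≡ d` (on the right) modulo 2. On `Ψ^{a,b,c}` the exponent of `k`
is `b - 2c`, which has the parity of `b` because `4p` is even.
-/

noncomputable section

/-- The q-integer `[n]_q`. -/
def qint (q : ℂ) (n : ℕ) : ℂ := (q ^ n - q⁻¹ ^ n) / (q - q⁻¹)

/-- The q-factorial. -/
def qfac (q : ℂ) : ℕ → ℂ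
  | 0 => 1
  | n + 1 => qint q (n + 1) * qfac q n

/-- Symmetric Gaussian binomial via the q-Pascal recursion. -/
def qbinom (q : ℂ) : ℕ → ℕ → ℂ
  | _, 0 => 1
  | 0, _ + 1 => 0
  | n + 1, k + 1 => q ^ (k + 1) * qbinom q n (k + 1) + q⁻¹ ^ (n - k) * qbinom q n k

/-- The underlying space of `H(B*)`: the free module on the basis
`F^a κ^b # E^c k^d`, `0 ≤ a, c ≤ p−1`, `b, d ∈ ℤ/4pℤ`. -/
abbrev HDSpace (p : ℕ) : Type :=
  (Fin p × ZMod (4 * p) × Fin p × ZMod (4 * p)) →₀ ℂ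

/-- The basis vector `F^x κ^y # E^z k^w`, declared to vanish when `x ≥ p` or `z ≥ p`
(the relations `F^p = 0`, `E^p = 0`). -/
def belem (p : ℕ) (x : ℕ) (y : ZMod (4 * p)) (z : ℕ) (w : ZMod (4 * p)) : HDSpace p :=
  if hx : x < p then
    if hz : z < p then Finsupp.single (⟨x, hx⟩, y, ⟨z, hz⟩, w) 1 else 0
  else 0

lemma exp_pi_mul_I_div_pow_self {n : ℕ} (hn : n ≠ 0) :
    Complex.exp (Real.pi * Complex.I / n) ^ n = -1 := by
  rw [← Complex.exp_nat_mul, mul_div_cancel₀ _ (Nat.cast_ne_zero.mpr hn), Complex.exp_pi_mul_I]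

lemma neg_one_zpow_eq_pow_of_even_sub {R : Type*} [DivisionRing R] {t : ℤ} {n : ℕ}
    (h : Even (t - n)) : (-1 : R) ^ t = (-1) ^ n := by
  rw [← sub_add_cancel t n, zpow_add₀ (neg_ne_zero.mpr one_ne_zero), h.neg_one_zpow, one_mul,
    zpow_natCast]

lemma ZMod.even_val_sub_two_mul_iff {N : ℕ} [NeZero N] (hN : 2 ∣ N) (x : ZMod N) (c : ℕ) :
    Even (x - 2 * c).val ↔ Even x.val := by
  have h2 : (2 : ZMod 2) = 0 := rfl
  simp only [← ZMod.natCast_eq_zero_iff_even, ← ZMod.cast_eq_val, ← ZMod.castHom_apply (h := hN),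
    map_sub, map_mul, map_ofNat, h2, zero_mul, sub_zero]

def HeisenbergDoubleMulFormula (p : ℕ) (q q2 : ℂ)
    (hm : HDSpace p →ₗ[ℂ] HDSpace p →ₗ[ℂ] HDSpace p) : Prop :=
  ∀ (r m a c : ℕ) (_ : r < p) (_ : m < p) (_ : a < p) (_ : c < p) (s n b d : ZMod (4 * p)),
    hm (belem p r s m n) (belem p a b c d)
      = ∑ u ∈ Finset.range (min m a + 1),
          (q2 ^ (-(u * ((u : ℤ) - 1))
                - (b.val : ℤ) * n.val + 2 * c * n.val
                + 2 * a * ((s.val : ℤ) - n.val)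
                + 2 * u * (2 * (c : ℤ) - a - b.val + m - s.val) : ℤ)
            * qbinom q m u * qbinom q a u * qfac q u * ((q - q⁻¹) ^ u)⁻¹)
          • belem p (a + r - u) (b + s) (m + c - u) (n + d + (2 * u : ℕ))

namespace HeisenbergDoubleMulFormula

variable {p : ℕ} {q q2 : ℂ} {hm : HDSpace p →ₗ[ℂ] HDSpace p →ₗ[ℂ] HDSpace p}

lemma lambda_mul_belem (h : HeisenbergDoubleMulFormula p q q2 hm) (hp : 0 < p)
    {a c : ℕ} (ha : a < p) (hc : c < p) (b d : ZMod (4 * p)) :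
    hm (belem p 0 (2 * p : ℕ) 0 (2 * p : ℕ)) (belem p a b c d)
      = q2 ^ ((2 * p : ℕ) * (2 * (c : ℤ) - b.val)) •
          belem p a (b + (2 * p : ℕ)) c (d + (2 * p : ℕ)) := by
  have : NeZero (4 * p) := ⟨by omega⟩
  rw [h 0 0 a c hp hp ha hc, ZMod.val_natCast_of_lt (by omega), add_comm _ d]
  simp only [Nat.zero_min, zero_add, Finset.sum_range_one, qbinom, qfac, Nat.cast_zero,
    Nat.sub_zero, Nat.mul_zero, mul_one, pow_zero, inv_one, add_zero]
  congr 2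
  push_cast
  ring

lemma belem_mul_lambda (h : HeisenbergDoubleMulFormula p q q2 hm) (hp : 0 < p)
    {a c : ℕ} (ha : a < p) (hc : c < p) (b d : ZMod (4 * p)) :
    hm (belem p a b c d) (belem p 0 (2 * p : ℕ) 0 (2 * p : ℕ))
      = q2 ^ ((2 * p : ℕ) * -(d.val : ℤ)) •
          belem p a (b + (2 * p : ℕ)) c (d + (2 * p : ℕ)) := by
  have : NeZero (4 * p) := ⟨by omega⟩
  rw [h a c 0 0 ha hc hp hp, ZMod.val_natCast_of_lt (by omega), add_comm _ b]
  simp only [Nat.min_zero, zero_add, Finset.sum_range_one, qbinom, qfac, Nat.cast_zero,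
    Nat.sub_zero, Nat.mul_zero, mul_one, pow_zero, inv_one, add_zero]
  congr 2
  push_cast
  ring

end HeisenbergDoubleMulFormula

theorem heisenberg_double_Lambda_general
    (p : ℕ) (hp : 2 ≤ p)
    (q q2 : ℂ)
    (hq2 : q2 = Complex.exp (Real.pi * Complex.I / (2 * p)))
    -- `hm` is the Heisenberg double multiplication, given on the basis by the
    -- smash-product formula:
    (hm : HDSpace p →ₗ[ℂ] HDSpace p →ₗ[ℂ] HDSpace p)
    (hm_def : ∀ (r m a c : ℕ) (_ : r < p) (_ : m < p) (_ : a < p) (_ : c < p)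
        (s n b d : ZMod (4 * p)),
      hm (belem p r s m n) (belem p a b c d)
        = ∑ u ∈ Finset.range (min m a + 1),
            (q2 ^ (-(u * ((u : ℤ) - 1))
                  - (b.val : ℤ) * n.val + 2 * c * n.val
                  + 2 * a * ((s.val : ℤ) - n.val)
                  + 2 * u * (2 * (c : ℤ) - a - b.val + m - s.val) : ℤ)
              * qbinom q m u * qbinom q a u * qfac q u * ((q - q⁻¹) ^ u)⁻¹)
            • belem p (a + r - u) (b + s) (m + c - u) (n + d + (2 * u : ℕ)))
    (Λ : HDSpace p) (hΛ : Λ = belem p 0 (2 * p : ℕ) 0 (2 * p : ℕ)) :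
    (∀ (a c : ℕ) (_ : a < p) (_ : c < p) (b d : ZMod (4 * p)),
      hm Λ (belem p a b c d)
        = ((-1 : ℂ) ^ b.val) • belem p a (b + (2 * p : ℕ)) c (d + (2 * p : ℕ))) ∧
    (∀ (a c : ℕ) (_ : a < p) (_ : c < p) (b d : ZMod (4 * p)),
      hm (belem p a b c d) Λ
        = ((-1 : ℂ) ^ d.val) • belem p a (b + (2 * p : ℕ)) c (d + (2 * p : ℕ))) ∧
    (∀ (a c : ℕ) (_ : a < p) (_ : c < p) (b : ZMod (4 * p)),
      hm Λ (belem p a b c (b - 2 * (c : ℕ)))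
        = hm (belem p a b c (b - 2 * (c : ℕ))) Λ) := by
  have : NeZero (4 * p) := ⟨by omega⟩
  have hsign : ∀ t : ℤ, q2 ^ ((2 * p : ℕ) * t) = (-1 : ℂ) ^ t := fun t => by
    rw [zpow_mul, zpow_natCast, hq2, ← Nat.cast_ofNat, ← Nat.cast_mul,
      exp_pi_mul_I_div_pow_self (by omega)]
  have left : ∀ (a c : ℕ) (_ : a < p) (_ : c < p) (b d : ZMod (4 * p)),
      hm Λ (belem p a b c d)
        = ((-1 : ℂ) ^ b.val) • belem p a (b + (2 * p : ℕ)) c (d + (2 * p : ℕ)) := by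
    intro a c ha hc b d
    rw [hΛ, HeisenbergDoubleMulFormula.lambda_mul_belem hm_def (by omega) ha hc, hsign,
      neg_one_zpow_eq_pow_of_even_sub]
    exact ⟨c - b.val, by ring⟩
  have right : ∀ (a c : ℕ) (_ : a < p) (_ : c < p) (b d : ZMod (4 * p)),
      hm (belem p a b c d) Λ
        = ((-1 : ℂ) ^ d.val) • belem p a (b + (2 * p : ℕ)) c (d + (2 * p : ℕ)) := by
    intro a c ha hc b d
    rw [hΛ, HeisenbergDoubleMulFormula.belem_mul_lambda hm_def (by omega) ha hc, hsign,
      neg_one_zpow_eq_pow_of_even_sub]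
    exact ⟨-d.val, by ring⟩
  refine ⟨left, right, fun a c ha hc b => ?_⟩
  rw [left a c ha hc, right a c ha hc,
    neg_one_pow_congr (ZMod.even_val_sub_two_mul_iff ⟨2 * p, by ring⟩ b c)]

theorem heisenberg_double_Lambda
    (p : ℕ) (hp : 2 ≤ p)
    (q q2 : ℂ)
    (hq : q = Complex.exp (Real.pi * Complex.I / p))
    (hq2 : q2 = Complex.exp (Real.pi * Complex.I / (2 * p)))
    -- `hm` is the Heisenberg double multiplication, given on the basis by the
    -- smash-product formula:
    (hm : HDSpace p →ₗ[ℂ] HDSpace p →ₗ[ℂ] HDSpace p)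
    (hm_def : ∀ (r m a c : ℕ) (_ : r < p) (_ : m < p) (_ : a < p) (_ : c < p)
        (s n b d : ZMod (4 * p)),
      hm (belem p r s m n) (belem p a b c d)
        = ∑ u ∈ Finset.range (min m a + 1),
            (q2 ^ (-(u * ((u : ℤ) - 1))
                  - (b.val : ℤ) * n.val + 2 * c * n.val
                  + 2 * a * ((s.val : ℤ) - n.val)
                  + 2 * u * (2 * (c : ℤ) - a - b.val + m - s.val) : ℤ)
              * qbinom q m u * qbinom q a u * qfac q u * ((q - q⁻¹) ^ u)⁻¹)
            • belem p (a + r - u) (b + s) (m + c - u) (n + d + (2 * u : ℕ)))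
    (Λ : HDSpace p) (hΛ : Λ = belem p 0 (2 * p : ℕ) 0 (2 * p : ℕ)) :
    (∀ (a c : ℕ) (_ : a < p) (_ : c < p) (b d : ZMod (4 * p)),
      hm Λ (belem p a b c d)
        = ((-1 : ℂ) ^ b.val) • belem p a (b + (2 * p : ℕ)) c (d + (2 * p : ℕ))) ∧
    (∀ (a c : ℕ) (_ : a < p) (_ : c < p) (b d : ZMod (4 * p)),
      hm (belem p a b c d) Λ
        = ((-1 : ℂ) ^ d.val) • belem p a (b + (2 * p : ℕ)) c (d + (2 * p : ℕ))) ∧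
    (∀ (a c : ℕ) (_ : a < p) (_ : c < p) (b : ZMod (4 * p)),
      hm Λ (belem p a b c (b - 2 * (c : ℕ)))
        = hm (belem p a b c (b - 2 * (c : ℕ))) Λ) :=
  heisenberg_double_Lambda_general p hp q q2 hq2 hm hm_def Λ hΛ
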